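/- The set of N-valid formulas is closed under modus ponens: if φ is N-valid and φ → ψ is N-valid, then ψ is N-valid. -/

import Mathlib

/- Formalization of Lorenzen dialogue games, following Felscher's presentation.

   Propositional formulas are built from atoms using ¬, ∧, ∨, →.  A dialogue
   for a formula φ is a sequence of moves beginning with Proponent (P)
   asserting φ at position 0, with O moving at odd positions and P at even
   positions.  Each later move attacks or defends an earlier move of the other
   player, according to the particle rules.  Structural rules (D10, D11, D12,
   D13, E, and the variants D10*, D10′) constrain dialogues further.  P wins
   if P made the last move and no moves are available to O; φ is S-valid if P
   has an S-winning strategy for φ. -/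

namespace LorenzenDialogues

/-- Propositional formulas: atoms, ¬, ∧, ∨, →. -/
inductive Formula : Type
  | atom : ℕ → Formula
  | neg  : Formula → Formula
  | and  : Formula → Formula → Formula
  | or   : Formula → Formula → Formula
  | imp  : Formula → Formula → Formula
deriving DecidableEq

/-- Statements: formulas together with the symbolic attacks `?`, `∧_L`, `∧_R`. -/
inductive Statement : Type
  | form  : Formula → Statement
  | qmark : Statement
  | andL  : Statement
  | andR  : Statement
deriving DecidableEq

/-- Particle rules, attack part: which statements attack which formulas. -/
inductive Attacks : Statement → Formula → Prop
  | andL (a b : Formula) : Attacks .andL (.and a b)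
  | andR (a b : Formula) : Attacks .andR (.and a b)
  | qmark (a b : Formula) : Attacks .qmark (.or a b)
  | imp (a b : Formula) : Attacks (.form a) (.imp a b)
  | neg (a : Formula) : Attacks (.form a) (.neg a)

/-- Particle rules, defense part: `Defends χ a s` means `s` is a permitted
    defense of the formula `χ` against the attack `a`.  (A negation admits
    no defense.) -/
inductive Defends : Formula → Statement → Statement → Prop
  | andL (a b : Formula) : Defends (.and a b) .andL (.form a)
  | andR (a b : Formula) : Defends (.and a b) .andR (.form b)
  | orL (a b : Formula) : Defends (.or a b) .qmark (.form a)
  | orR (a b : Formula) : Defends (.or a b) .qmark (.form b)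
  | imp (a b : Formula) : Defends (.imp a b) (.form a) (.form b)

/-- A move: a statement, a flag recording whether it is an attack (`true`)
    or a defense (`false`), and the position of the earlier move it attacks,
    resp. the earlier attack it defends against. -/
structure Move : Type where
  statement : Statement
  isAttack : Bool
  ref : ℕ
deriving DecidableEq

/-- A dialogue: the initial formula asserted by P at position 0, followed by
    the list of later moves (the move at list index `i` occupies position
    `i + 1`; O moves at odd positions, P at even positions). -/
structure Dialogue : Type where
  initial : Formula
  moves : List Move

/-- The statement asserted at position `n` (if any). -/
def Dialogue.stmtAt (d : Dialogue) (n : ℕ) : Option Statement :=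
  if n = 0 then some (.form d.initial) else (d.moves[n - 1]?).map Move.statement

/-- The move at position `n ≥ 1` (if any); position 0 is the initial assertion,
    not a move. -/
def Dialogue.moveAt (d : Dialogue) (n : ℕ) : Option Move :=
  if n = 0 then none else d.moves[n - 1]?

/-- The move `m`, played at position `n ≥ 1`, is permitted by the particle
    rules: it refers to an earlier position of the other player; if it is an
    attack, it attacks a formula asserted there, and if it is a defense, it
    responds to an attack played there, as the particle rules prescribe. -/
def MoveOK (d : Dialogue) (n : ℕ) (m : Move) : Prop :=
  m.ref < n ∧ m.ref % 2 ≠ n % 2 ∧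
    (m.isAttack = true →
      ∃ ψ, d.stmtAt m.ref = some (.form ψ) ∧ Attacks m.statement ψ) ∧
    (m.isAttack = false →
      ∃ a χ, d.moveAt m.ref = some a ∧ a.isAttack = true ∧
        d.stmtAt a.ref = some (.form χ) ∧ Defends χ a.statement m.statement)

/-- The dialogue adheres to the particle rules (every move is legal). -/
def ParticleOK (d : Dialogue) : Prop :=
  ∀ i m, d.moves[i]? = some m → MoveOK d (i + 1) m

/-- Position `n` carries a defense of the attack made at position `r`. -/
def IsDefenseOf (d : Dialogue) (n r : ℕ) : Prop :=
  ∃ m, d.moveAt n = some m ∧ m.isAttack = false ∧ m.ref = r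

/-- Position `n` carries an attack on the assertion made at position `r`. -/
def IsAttackOn (d : Dialogue) (n r : ℕ) : Prop :=
  ∃ m, d.moveAt n = some m ∧ m.isAttack = true ∧ m.ref = r

/-- Position `n` carries an attack. -/
def IsAttackPos (d : Dialogue) (n : ℕ) : Prop :=
  ∃ m, d.moveAt n = some m ∧ m.isAttack = true

/-- The attack at position `r` is still open (no defense against it has yet
    been played) before position `k`. -/
def OpenAt (d : Dialogue) (r k : ℕ) : Prop :=
  IsAttackPos d r ∧ ¬ ∃ j, j < k ∧ IsDefenseOf d j r

/-- (D10) P may assert an atomic formula only after it has been asserted by O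
    before. -/
def D10 (d : Dialogue) : Prop :=
  ∀ n p, n % 2 = 0 → d.stmtAt n = some (.form (.atom p)) →
    ∃ j, j < n ∧ j % 2 = 1 ∧ d.stmtAt j = some (.form (.atom p))

/-- (D10*) P may assert an atom `p` only if O has asserted `p` or `¬p`
    before. -/
def D10star (d : Dialogue) : Prop :=
  ∀ n p, n % 2 = 0 → d.stmtAt n = some (.form (.atom p)) →
    ∃ j, j < n ∧ j % 2 = 1 ∧
      (d.stmtAt j = some (.form (.atom p)) ∨
        d.stmtAt j = some (.form (.neg (.atom p))))

/-- (D10′) P may assert an atom `p` only if O has asserted `p` or `¬¬p`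
    before. -/
def D10prime (d : Dialogue) : Prop :=
  ∀ n p, n % 2 = 0 → d.stmtAt n = some (.form (.atom p)) →
    ∃ j, j < n ∧ j % 2 = 1 ∧
      (d.stmtAt j = some (.form (.atom p)) ∨
        d.stmtAt j = some (.form (.neg (.neg (.atom p)))))

/-- (D11) When defending, only the most recent open attack may be responded
    to: the attack defended against is open, and no strictly more recent open
    attack (against the same player) exists. -/
def D11 (d : Dialogue) : Prop :=
  ∀ n r, IsDefenseOf d n r →
    OpenAt d r n ∧ ¬ ∃ r', r < r' ∧ r' < n ∧ r' % 2 = r % 2 ∧ OpenAt d r' n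

/-- (D12) An attack may be answered at most once. -/
def D12 (d : Dialogue) : Prop :=
  ∀ n₁ n₂ r, IsDefenseOf d n₁ r → IsDefenseOf d n₂ r → n₁ = n₂

/-- (D13) A P-assertion (made at an even position) may be attacked at most
    once. -/
def D13 (d : Dialogue) : Prop :=
  ∀ n₁ n₂ r, r % 2 = 0 → IsAttackOn d n₁ r → IsAttackOn d n₂ r → n₁ = n₂

/-- (E) O can react only upon the immediately preceding P-statement. -/
def ERule (d : Dialogue) : Prop :=
  ∀ n m, n % 2 = 1 → d.moveAt n = some m → m.ref = n - 1

/-- A ruleset is a set of structural rules, i.e. a predicate on dialogues. -/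
def Ruleset := Dialogue → Prop

/-- Ruleset D = {D10, D11, D12, D13}. -/
def rulesetD : Ruleset := fun d => D10 d ∧ D11 d ∧ D12 d ∧ D13 d

/-- Ruleset E = D ∪ {E}. -/
def rulesetE : Ruleset := fun d => rulesetD d ∧ ERule d

/-- Ruleset CL = E − {D11, D12} = {D10, D13, E}. -/
def rulesetCL : Ruleset := fun d => D10 d ∧ D13 d ∧ ERule d

/-- Ruleset N = D − {D11, D12} = {D10, D13}. -/
def rulesetN : Ruleset := fun d => D10 d ∧ D13 d

/-- Ruleset E* = {D10*, D11, D12, D13, E}. -/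
def rulesetEstar : Ruleset :=
  fun d => D10star d ∧ D11 d ∧ D12 d ∧ D13 d ∧ ERule d

/-- Ruleset E′ = {D10′, D11, D12, D13, E}. -/
def rulesetEprime : Ruleset :=
  fun d => D10prime d ∧ D11 d ∧ D12 d ∧ D13 d ∧ ERule d

/-- An S-dialogue: a dialogue adhering to the particle rules and to the
    structural rules S. -/
def Legal (S : Ruleset) (d : Dialogue) : Prop := ParticleOK d ∧ S d

/-- Extend a dialogue by one move. -/
def Dialogue.extend (d : Dialogue) (m : Move) : Dialogue :=
  ⟨d.initial, d.moves ++ [m]⟩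

/-- The position about to be played. -/
def nextPos (d : Dialogue) : ℕ := d.moves.length + 1

/-- It is P's turn (the next position is even). -/
def PTurn (d : Dialogue) : Prop := nextPos d % 2 = 0

/-- The move `m` legally extends the S-dialogue `d`. -/
def LegalExt (S : Ruleset) (d : Dialogue) (m : Move) : Prop :=
  Legal S (d.extend m)

/-- `PWinningC S C d` holds when P, moving under the additional constraint
    `C` on P's own choices, has a winning strategy in the S-dialogue game
    continuing the dialogue `d`: at P's turn, P has a legal move (satisfying
    `C`) after which P is still winning; at O's turn, every legal O-move
    leads to a position where P is winning (in particular, if no O-move is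
    available, P has won: P made the last move and O cannot move). -/
inductive PWinningC (S : Ruleset) (C : Dialogue → Move → Prop) : Dialogue → Prop
  | pMove (d : Dialogue) (m : Move) (hturn : PTurn d)
      (hm : LegalExt S d m) (hC : C d m)
      (h : PWinningC S C (d.extend m)) : PWinningC S C d
  | oMoves (d : Dialogue) (hturn : ¬ PTurn d)
      (h : ∀ m, LegalExt S d m → PWinningC S C (d.extend m)) :
      PWinningC S C d

/-- P has a winning strategy continuing the S-dialogue `d`. -/
def PWinning (S : Ruleset) (d : Dialogue) : Prop :=
  PWinningC S (fun _ _ => True) d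

/-- `valid S φ` (written `⊨_S φ`): the opening assertion of φ is itself a
    legal S-dialogue and P has an S-winning strategy for φ. -/
def valid (S : Ruleset) (φ : Formula) : Prop :=
  Legal S ⟨φ, []⟩ ∧ PWinning S ⟨φ, []⟩

/-- Derivability in intuitionistic propositional logic (a Hilbert-style
    axiomatization with modus ponens). -/
inductive IProv : Formula → Prop
  | k (a b : Formula) : IProv (.imp a (.imp b a))
  | s (a b c : Formula) :
      IProv (.imp (.imp a (.imp b c)) (.imp (.imp a b) (.imp a c)))
  | andE1 (a b : Formula) : IProv (.imp (.and a b) a)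
  | andE2 (a b : Formula) : IProv (.imp (.and a b) b)
  | andI (a b : Formula) : IProv (.imp a (.imp b (.and a b)))
  | orI1 (a b : Formula) : IProv (.imp a (.or a b))
  | orI2 (a b : Formula) : IProv (.imp b (.or a b))
  | orE (a b c : Formula) :
      IProv (.imp (.imp a c) (.imp (.imp b c) (.imp (.or a b) c)))
  | negI (a b : Formula) :
      IProv (.imp (.imp a b) (.imp (.imp a (.neg b)) (.neg a)))
  | negE (a b : Formula) : IProv (.imp (.neg a) (.imp a b))
  | mp (a b : Formula) : IProv (.imp a b) → IProv a → IProv b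

/-- The stability principle ¬¬p → p for the atom `p`. -/
def stab (p : ℕ) : Formula := .imp (.neg (.neg (.atom p))) (.atom p)

/-- Stable logic: intuitionistic propositional logic plus all instances of
    the stability scheme ¬¬p → p for atoms p, closed under modus ponens. -/
inductive StableProv : Formula → Prop
  | intuit (a : Formula) : IProv a → StableProv a
  | stab (p : ℕ) : StableProv (stab p)
  | mp (a b : Formula) : StableProv (.imp a b) → StableProv a → StableProv b

/-- Boolean evaluation of a formula under a valuation of its atoms. -/
def Formula.eval (v : ℕ → Bool) : Formula → Bool
  | .atom p => v p
  | .neg a => !(a.eval v)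
  | .and a b => a.eval v && b.eval v
  | .or a b => a.eval v || b.eval v
  | .imp a b => !(a.eval v) || b.eval v

/-- A classical tautology: true under every Boolean valuation. -/
def Tautology (φ : Formula) : Prop := ∀ v, φ.eval v = true

/-- Uniform substitution of formulas for atoms, applied homomorphically. -/
def Formula.subst (σ : ℕ → Formula) : Formula → Formula
  | .atom p => σ p
  | .neg a => .neg (a.subst σ)
  | .and a b => .and (a.subst σ) (b.subst σ)
  | .or a b => .or (a.subst σ) (b.subst σ)
  | .imp a b => .imp (a.subst σ) (b.subst σ)

/-- The atoms occurring in a formula. -/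
def Formula.atoms : Formula → List ℕ
  | .atom p => [p]
  | .neg a => a.atoms
  | .and a b => a.atoms ++ b.atoms
  | .or a b => a.atoms ++ b.atoms
  | .imp a b => a.atoms ++ b.atoms

/-- Conjunction of a nonempty list of formulas. -/
def conjList (f : Formula) : List Formula → Formula
  | [] => f
  | g :: gs => .and f (conjList g gs)

/-- The conjunction (¬¬p → p) ∧ … of stability instances for the atoms
    `p :: ps`. -/
def stabConj (p : ℕ) (ps : List ℕ) : Formula :=
  conjList (stab p) (ps.map stab)


/-!
If P ever attacks an O-assertion other than a negation, O can repeat the same defense forever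
(ruleset N has no rule against it), so a winning P attacks only negations. Then O can never
defend, and if O always attacks P's latest assertion at once, D13 leaves O no other move. P's
winning strategies along such plays are the derivations of `NGame.Win A D`, and φ is N-valid iff P
wins after asserting φ with `A = D = ∅`.

This game admits cut elimination: an O-concession `χ` can be dropped when P wins by asserting `χ`
himself (induction on the strategy, nested in an induction on `χ` for `χ = ¬¬c`, where the roles
of P and O swap). Modus ponens follows by cutting `φ` from P's game after O's attack `φ` on
`φ → ψ`: what is left forces P to assert `ψ` and to defend it.
-/

def conceded (s : Statement) : Set Formula := {a | s = .form a}

def defenses (f : Formula) (s : Statement) : Set Formula := {δ | Defends f s (.form δ)}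

@[simp] theorem conceded_form (a : Formula) : conceded (.form a) = {a} := by
  ext x
  simp [conceded, eq_comm]

@[simp] theorem defenses_neg (c : Formula) (s : Statement) : defenses (.neg c) s = ∅ :=
  Set.eq_empty_of_forall_notMem fun _ h => nomatch h

@[simp] theorem defenses_imp (a b : Formula) : defenses (.imp a b) (.form a) = {b} := by
  ext x
  constructor
  · rintro ⟨⟩
    rfl
  · rintro rfl
    exact .imp _ _

namespace NGame

/-- P to move, with `A` the formulas O has conceded and `D` the formulas P may assert as
defenses against O's attacks. -/
inductive Win : Set Formula → Set Formula → Prop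
  | intro {A D : Set Formula} (f : Formula) (available : f ∈ D ∨ .neg f ∈ A)
      (atom_mem : (∃ p, f = .atom p) → f ∈ A)
      (win : ∀ s, Attacks s f → Win (A ∪ conceded s) (D ∪ defenses f s)) : Win A D

def WinsAfter (f : Formula) (A D : Set Formula) : Prop :=
  ((∃ p, f = .atom p) → f ∈ A) ∧ ∀ s, Attacks s f → Win (A ∪ conceded s) (D ∪ defenses f s)

theorem Win.of_winsAfter {f : Formula} {A D : Set Formula} (hf : f ∈ D ∨ .neg f ∈ A)
    (h : WinsAfter f A D) : Win A D :=
  .intro f hf h.1 h.2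

theorem Win.mono {A D A' D' : Set Formula} (h : Win A D) (hA : A ⊆ A') (hD : D ⊆ D') :
    Win A' D' := by
  induction h generalizing A' D' with
  | intro f hf hat _ ih =>
    exact .intro f (hf.imp (@hD _) (@hA _)) (fun hp => hA (hat hp)) fun s hs =>
      ih s hs (Set.union_subset_union_left _ hA) (Set.union_subset_union_left _ hD)

theorem WinsAfter.mono {f : Formula} {A D A' D' : Set Formula} (h : WinsAfter f A D)
    (hA : A ⊆ A') (hD : D ⊆ D') : WinsAfter f A' D' :=
  ⟨fun hp => hA (h.1 hp), fun s hs => (h.2 s hs).mono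
    (Set.union_subset_union_left _ hA) (Set.union_subset_union_left _ hD)⟩

theorem winsAfter_neg_iff {c : Formula} {A D : Set Formula} :
    WinsAfter (.neg c) A D ↔ Win (insert c A) D := by
  constructor
  · intro h
    simpa using h.2 _ (.neg c)
  · intro h
    refine ⟨fun ⟨_, hp⟩ => (nomatch hp), fun s hs => ?_⟩
    cases hs
    simpa using h

theorem Win.of_insert_inert {g : Formula} {A₁ D : Set Formula} (h : Win A₁ D)
    {A : Set Formula} (hA : A₁ ⊆ insert g A) (hatom : ∀ p, g ≠ .atom p)
    (hneg : ∀ c, g ≠ .neg c) : Win A D := by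
  induction h generalizing A with
  | intro f hf hat _ ih =>
    refine .intro f (hf.imp_right fun h => ?_) (fun hp => ?_) fun s hs => ih s hs ?_
    · exact (hA h).resolve_left fun h => hneg f h.symm
    · obtain ⟨p, rfl⟩ := hp
      exact (hA (hat ⟨p, rfl⟩)).resolve_left fun h => hatom p h.symm
    · rw [← Set.insert_union]
      exact Set.union_subset_union_left _ hA

theorem Win.cut {χ : Formula} {A D : Set Formula} (hχ : WinsAfter χ A D)
    {A₁ D₁ : Set Formula} (h : Win A₁ D₁) (hA : A₁ ⊆ insert χ A) (hD : D₁ ⊆ D) :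
    Win A D := by
  induction h generalizing A D with
  | intro f hf hat _ ih =>
    by_cases hfχ : Formula.neg f = χ
    · subst hfχ
      have hO : Win (insert f A) D := winsAfter_neg_iff.1 hχ
      cases f with
      | atom p =>
        have hp : Formula.atom p ∈ A := (hA (hat ⟨p, rfl⟩)).resolve_left nofun
        exact hO.mono (Set.insert_subset hp subset_rfl) subset_rfl
      | neg c =>
        -- P attacked O's `χ = ¬¬c` with `¬c` and now wins by asserting `¬c`: cut that next.
        have hc : WinsAfter (.neg c) A D := by
          refine winsAfter_neg_iff.2
            (ih _ (.neg c) (hχ.mono (Set.subset_insert _ _) subset_rfl) ?_ (by simpa using hD))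
          rw [conceded_form, Set.union_singleton]
          exact Set.insert_subset (by simp)
            (hA.trans (Set.insert_subset_insert (Set.subset_insert _ _)))
        exact Win.cut hc hO subset_rfl subset_rfl
      | and a b => exact hO.of_insert_inert subset_rfl nofun nofun
      | or a b => exact hO.of_insert_inert subset_rfl nofun nofun
      | imp a b => exact hO.of_insert_inert subset_rfl nofun nofun
    · refine .intro f (hf.imp (@hD _) fun h => (hA h).resolve_left hfχ) (fun hp => ?_)
        fun s hs => ih s hs (hχ.mono Set.subset_union_left Set.subset_union_left) ?_
          (Set.union_subset_union_left _ hD)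
      · rcases hA (hat hp) with h | h
        · subst h
          exact hχ.1 hp
        · exact h
      · rw [← Set.insert_union]
        exact Set.union_subset_union_left _ hA
termination_by χ

/-- Re-asserting `ψ`, already attacked with `s`, gains P nothing: O repeats the attack `s`. -/
theorem Win.of_insert_attacked {ψ : Formula} {s : Statement} (hs : Attacks s ψ)
    {A₁ D₁ : Set Formula} (h : Win A₁ D₁) {A D : Set Formula} (hsA : conceded s ⊆ A)
    (hsD : defenses ψ s ⊆ D) (hA : A₁ ⊆ A) (hD : D₁ ⊆ insert ψ D) : Win A D := by
  induction h generalizing A D with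
  | intro f hf hat _ ih =>
    by_cases hfψ : f = ψ
    · subst hfψ
      exact ih s hs hsA hsD (Set.union_subset hA hsA)
        (Set.union_subset hD (hsD.trans (Set.subset_insert _ _)))
    · refine .intro f (hf.imp (fun h => (hD h).resolve_left hfψ) (@hA _))
        (fun hp => hA (hat hp)) fun s' hs' => ih s' hs' (hsA.trans Set.subset_union_left)
          (hsD.trans Set.subset_union_left) (Set.union_subset_union_left _ hA) ?_
      rw [← Set.insert_union]
      exact Set.union_subset_union_left _ hD

theorem WinsAfter.modus_ponens {φ ψ : Formula} (hφ : WinsAfter φ ∅ ∅)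
    (hφψ : WinsAfter (.imp φ ψ) ∅ ∅) : WinsAfter ψ ∅ ∅ := by
  have hW : Win ∅ {ψ} :=
    Win.cut (hφ.mono subset_rfl (Set.empty_subset _)) (hφψ.2 _ (.imp φ ψ))
      (by simp) (by simp)
  obtain ⟨f, hf, hat, hwin⟩ := hW
  obtain rfl : f = ψ := by simpa using hf
  exact ⟨hat, fun s hs => (hwin s hs).of_insert_attacked hs Set.subset_union_right
    Set.subset_union_right subset_rfl (by simp)⟩

end NGame

namespace Dialogue

variable {d : Dialogue} {m mv : Move} {n : ℕ} {x : Statement}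

@[simp] theorem length_moves_extend (d : Dialogue) (m : Move) :
    (d.extend m).moves.length = d.moves.length + 1 := by
  simp [extend]

theorem getElem?_moves_extend (d : Dialogue) (m : Move) (i : ℕ) :
    (d.extend m).moves[i]? = if i = d.moves.length then some m else d.moves[i]? := by
  simp only [extend, List.getElem?_append]
  split_ifs <;> simp_all
  omega

theorem stmtAt_extend (d : Dialogue) (m : Move) (n : ℕ) :
    (d.extend m).stmtAt n =
      if n = d.moves.length + 1 then some m.statement else d.stmtAt n := by
  unfold stmtAt
  rw [getElem?_moves_extend]
  split_ifs <;> simp_all [extend]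
  omega

theorem moveAt_extend (d : Dialogue) (m : Move) (n : ℕ) :
    (d.extend m).moveAt n = if n = d.moves.length + 1 then some m else d.moveAt n := by
  unfold moveAt
  rw [getElem?_moves_extend]
  split_ifs <;> simp_all
  omega

theorem le_of_stmtAt_eq_some (h : d.stmtAt n = some x) : n ≤ d.moves.length := by
  unfold stmtAt at h
  split_ifs at h with h0
  · omega
  · obtain ⟨_, hi, -⟩ := Option.map_eq_some_iff.1 h
    have := (List.getElem?_eq_some_iff.1 hi).1
    omega

theorem pos_le_of_moveAt_eq_some (h : d.moveAt n = some mv) :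
    0 < n ∧ n ≤ d.moves.length := by
  unfold moveAt at h
  split_ifs at h with h0
  have := (List.getElem?_eq_some_iff.1 h).1
  omega

theorem stmtAt_extend_of_le (h : n ≤ d.moves.length) : (d.extend m).stmtAt n = d.stmtAt n := by
  rw [stmtAt_extend, if_neg (by omega)]

theorem moveAt_extend_of_le (h : n ≤ d.moves.length) : (d.extend m).moveAt n = d.moveAt n := by
  rw [moveAt_extend, if_neg (by omega)]

@[simp] theorem stmtAt_extend_self :
    (d.extend m).stmtAt (d.moves.length + 1) = some m.statement := by
  rw [stmtAt_extend, if_pos rfl]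

@[simp] theorem moveAt_extend_self : (d.extend m).moveAt (d.moves.length + 1) = some m := by
  rw [moveAt_extend, if_pos rfl]

theorem stmtAt_extend_of_eq_some (h : d.stmtAt n = some x) :
    (d.extend m).stmtAt n = some x := by
  rw [stmtAt_extend_of_le (le_of_stmtAt_eq_some h), h]

theorem moveAt_extend_of_eq_some (h : d.moveAt n = some mv) :
    (d.extend m).moveAt n = some mv := by
  rw [moveAt_extend_of_le (pos_le_of_moveAt_eq_some h).2, h]

theorem isAttackOn_extend_iff {r : ℕ} : IsAttackOn (d.extend m) n r ↔
    IsAttackOn d n r ∨ n = d.moves.length + 1 ∧ m.isAttack = true ∧ m.ref = r := by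
  unfold IsAttackOn
  rw [moveAt_extend]
  split_ifs with h
  · subst h
    have hnone : d.moveAt (d.moves.length + 1) = none :=
      Option.eq_none_iff_forall_ne_some.2 fun _ hmv => by
        have := (pos_le_of_moveAt_eq_some hmv).2
        omega
    simp [hnone]
  · simp [h]

def oAssertions (d : Dialogue) : Set Formula :=
  {χ | ∃ n, n % 2 = 1 ∧ d.stmtAt n = some (.form χ)}

def pDefenses (d : Dialogue) : Set Formula :=
  {δ | ∃ n s r χ, n % 2 = 1 ∧ d.moveAt n = some ⟨s, true, r⟩ ∧ d.stmtAt r = some (.form χ) ∧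
    δ ∈ defenses χ s}

end Dialogue

open Dialogue

theorem ParticleOK.moveOK {d : Dialogue} (hp : ParticleOK d) {n : ℕ} {mv : Move}
    (h : d.moveAt n = some mv) : MoveOK d n mv := by
  have hn := (pos_le_of_moveAt_eq_some h).1
  unfold Dialogue.moveAt at h
  rw [if_neg (by omega)] at h
  simpa [Nat.sub_add_cancel hn] using hp _ _ h

theorem moveOK_extend_iff {d : Dialogue} (hp : ParticleOK d) {m mv : Move} {k : ℕ}
    (hk : k ≤ d.moves.length + 1) : MoveOK (d.extend m) k mv ↔ MoveOK d k mv := by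
  unfold MoveOK
  refine and_congr_right fun hlt => and_congr_right fun _ => and_congr ?_ ?_
  · rw [stmtAt_extend_of_le (by omega)]
  · rw [moveAt_extend_of_le (by omega)]
    refine imp_congr_right fun _ => exists_congr fun a => exists_congr fun χ => ?_
    constructor
    · rintro ⟨ha, haa, hχ, hd⟩
      rw [stmtAt_extend_of_le (by have := (hp.moveOK ha).1; omega)] at hχ
      exact ⟨ha, haa, hχ, hd⟩
    · rintro ⟨ha, haa, hχ, hd⟩
      exact ⟨ha, haa, stmtAt_extend_of_eq_some hχ, hd⟩

theorem particleOK_extend_iff {d : Dialogue} (hp : ParticleOK d) {m : Move} :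
    ParticleOK (d.extend m) ↔ MoveOK d (d.moves.length + 1) m := by
  rw [← moveOK_extend_iff hp le_rfl]
  constructor
  · intro h
    exact h _ _ (by rw [getElem?_moves_extend, if_pos rfl])
  · intro h i mv hi
    rw [getElem?_moves_extend] at hi
    split_ifs at hi with hi'
    · cases hi
      subst hi'
      exact h
    · rw [moveOK_extend_iff hp (by have := (List.getElem?_eq_some_iff.1 hi).1; omega)]
      exact hp _ _ hi

theorem Legal.atom_mem_oAssertions {d : Dialogue} (hL : Legal rulesetN d) {n p : ℕ}
    (hn : n % 2 = 0) (h : d.stmtAt n = some (.form (.atom p))) : .atom p ∈ d.oAssertions :=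
  let ⟨j, _, hj, hs⟩ := hL.2.1 n p hn h
  ⟨j, hj, hs⟩

theorem legalExt_iff {d : Dialogue} (hL : Legal rulesetN d) {m : Move} :
    LegalExt rulesetN d m ↔ MoveOK d (d.moves.length + 1) m ∧
      ((d.moves.length + 1) % 2 = 0 → ∀ p, m.statement = .form (.atom p) →
        .atom p ∈ d.oAssertions) ∧
      (m.isAttack = true → m.ref % 2 = 0 → ∀ n, ¬ IsAttackOn d n m.ref) := by
  obtain ⟨hp, h10, h13⟩ := hL
  rw [LegalExt, Legal, particleOK_extend_iff hp]
  refine and_congr_right fun _ => ⟨fun ⟨h10', h13'⟩ => ⟨?_, ?_⟩, fun ⟨h10', h13'⟩ => ⟨?_, ?_⟩⟩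
  · intro heven p hmp
    obtain ⟨j, hj, hjodd, hjs⟩ := h10' _ p heven (by rw [stmtAt_extend_self, hmp])
    rw [stmtAt_extend_of_le (by omega)] at hjs
    exact ⟨j, hjodd, hjs⟩
  · intro hatt heven n hn
    have := h13' _ _ _ heven (isAttackOn_extend_iff.2 (.inl hn))
      (isAttackOn_extend_iff.2 (.inr ⟨rfl, hatt, rfl⟩))
    obtain ⟨_, hmv, -⟩ := hn
    have := (pos_le_of_moveAt_eq_some hmv).2
    omega
  · intro n p hn hs
    rw [stmtAt_extend] at hs
    split_ifs at hs with h
    · obtain ⟨j, hjodd, hjs⟩ := h10' (h ▸ hn) p (Option.some_inj.1 hs)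
      exact ⟨j, by have := le_of_stmtAt_eq_some hjs; omega, hjodd,
        stmtAt_extend_of_eq_some hjs⟩
    · obtain ⟨j, hj, hjodd, hjs⟩ := h10 n p hn hs
      exact ⟨j, hj, hjodd, stmtAt_extend_of_eq_some hjs⟩
  · intro n₁ n₂ r hr h₁ h₂
    rcases isAttackOn_extend_iff.1 h₁ with h₁ | ⟨rfl, hatt, rfl⟩ <;>
      rcases isAttackOn_extend_iff.1 h₂ with h₂ | ⟨rfl, hatt, hr₂⟩
    · exact h13 _ _ _ hr h₁ h₂
    · subst hr₂
      exact absurd h₁ (h13' hatt hr _)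
    · exact absurd h₂ (h13' hatt hr _)
    · rfl

/-- O may answer P's attack at position `n` with the same defense `δ` over and over: nothing in
ruleset N forbids repeating a defense, so P can never win once such an attack has been made. -/
theorem not_pWinningC_of_defensible {C : Dialogue → Move → Prop} {d : Dialogue}
    (hw : PWinningC rulesetN C d) (hL : Legal rulesetN d) {n r : ℕ} {s : Statement}
    {χ δ : Formula} (hn : n % 2 = 0) (hmv : d.moveAt n = some ⟨s, true, r⟩)
    (hr : d.stmtAt r = some (.form χ)) (hδ : Defends χ s (.form δ)) : False := by
  induction hw with
  | pMove d m _ hm _ _ ih =>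
    exact ih hm (moveAt_extend_of_eq_some hmv) (stmtAt_extend_of_eq_some hr)
  | oMoves d hturn _ ih =>
    have hlegal : LegalExt rulesetN d ⟨.form δ, false, n⟩ := by
      refine (legalExt_iff hL).2
        ⟨⟨?_, ?_, nofun, fun _ => ⟨_, χ, hmv, rfl, hr, hδ⟩⟩, ?_, nofun⟩
      · show n < d.moves.length + 1
        have := (pos_le_of_moveAt_eq_some hmv).2
        omega
      · show n % 2 ≠ (d.moves.length + 1) % 2
        unfold PTurn nextPos at hturn
        omega
      · unfold PTurn nextPos at hturn
        omega
    exact ih _ hlegal hlegal (moveAt_extend_of_eq_some hmv) (stmtAt_extend_of_eq_some hr)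

theorem Attacks.defends_or_neg {s : Statement} {χ : Formula} (h : Attacks s χ) :
    (∃ δ, Defends χ s (.form δ)) ∨ ∃ c, χ = .neg c ∧ s = .form c := by
  cases h
  exacts [.inl ⟨_, .andL _ _⟩, .inl ⟨_, .andR _ _⟩, .inl ⟨_, .orL _ _⟩, .inl ⟨_, .imp _ _⟩,
    .inr ⟨_, rfl, rfl⟩]

namespace Dialogue

variable {d : Dialogue} {m : Move}

theorem oAssertions_extend (d : Dialogue) (m : Move) : (d.extend m).oAssertions =
    d.oAssertions ∪ {χ | (d.moves.length + 1) % 2 = 1 ∧ m.statement = .form χ} := by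
  ext χ
  simp only [oAssertions, Set.mem_union, Set.mem_ofPred_eq, stmtAt_extend]
  constructor
  · rintro ⟨n, hn, hs⟩
    split_ifs at hs with h
    · exact .inr ⟨h ▸ hn, Option.some_inj.1 hs⟩
    · exact .inl ⟨n, hn, hs⟩
  · rintro (⟨n, hn, hs⟩ | ⟨hodd, hm⟩)
    · exact ⟨n, hn, by rw [if_neg (by have := le_of_stmtAt_eq_some hs; omega), hs]⟩
    · exact ⟨_, hodd, by rw [if_pos rfl, hm]⟩

theorem pDefenses_extend (hp : ParticleOK d) (m : Move) : (d.extend m).pDefenses =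
    d.pDefenses ∪ {δ | (d.moves.length + 1) % 2 = 1 ∧ m.isAttack = true ∧
      ∃ χ, (d.extend m).stmtAt m.ref = some (.form χ) ∧ δ ∈ defenses χ m.statement} := by
  ext δ
  simp only [pDefenses, Set.mem_union, Set.mem_ofPred_eq, moveAt_extend]
  constructor
  · rintro ⟨n, s, r, χ, hn, hmv, hr, hδ⟩
    split_ifs at hmv with h
    · cases hmv
      exact .inr ⟨h ▸ hn, rfl, χ, hr, hδ⟩
    · have hrn : r < n := (hp.moveOK hmv).1
      have hn' := (pos_le_of_moveAt_eq_some hmv).2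
      rw [stmtAt_extend_of_le (by omega)] at hr
      exact .inl ⟨n, s, r, χ, hn, hmv, hr, hδ⟩
  · rintro (⟨n, s, r, χ, hn, hmv, hr, hδ⟩ | ⟨hodd, hatt, χ, hr, hδ⟩)
    · have hn' := (pos_le_of_moveAt_eq_some hmv).2
      exact ⟨n, s, r, χ, hn, by rw [if_neg (by omega), hmv], stmtAt_extend_of_eq_some hr, hδ⟩
    · obtain ⟨s, b, r⟩ := m
      cases hatt
      exact ⟨_, s, r, χ, hodd, if_pos rfl, hr, hδ⟩

theorem oAssertions_extend_of_even (h : (d.moves.length + 1) % 2 = 0) :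
    (d.extend m).oAssertions = d.oAssertions := by
  simp [oAssertions_extend, h]

theorem pDefenses_extend_of_even (hp : ParticleOK d) (h : (d.moves.length + 1) % 2 = 0) :
    (d.extend m).pDefenses = d.pDefenses := by
  simp [pDefenses_extend hp, h]

end Dialogue

/-- The positions reached when P attacks only O's negations and O always attacks P's latest
assertion at once. -/
structure Normal (d : Dialogue) : Prop where
  legal : Legal rulesetN d
  attack_neg : ∀ n mv, n % 2 = 0 → d.moveAt n = some mv → mv.isAttack = true →
    ∃ c, d.stmtAt mv.ref = some (.form (.neg c))
  attacked : ∀ r χ s, r < d.moves.length → r % 2 = 0 → d.stmtAt r = some (.form χ) →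
    Attacks s χ → ∃ n, IsAttackOn d n r

namespace Normal

variable {d : Dialogue} {m : Move} {f : Formula}

theorem initial {θ : Formula} (hL : Legal rulesetN ⟨θ, []⟩) : Normal ⟨θ, []⟩ where
  legal := hL
  attack_neg _ _ _ hmv := by
    have := pos_le_of_moveAt_eq_some hmv
    simp at this
    omega
  attacked _ _ _ hr := by simp at hr

theorem extend (h : Normal d) (hm : LegalExt rulesetN d m)
    (hneg : (d.moves.length + 1) % 2 = 0 → m.isAttack = true →
      ∃ c, d.stmtAt m.ref = some (.form (.neg c)))
    (hlast : d.moves.length % 2 = 0 → m.isAttack = true ∧ m.ref = d.moves.length) :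
    Normal (d.extend m) where
  legal := hm
  attack_neg n mv hn hmv hatt := by
    rw [moveAt_extend] at hmv
    split_ifs at hmv with hn'
    · cases hmv
      obtain ⟨c, hc⟩ := hneg (hn' ▸ hn) hatt
      exact ⟨c, stmtAt_extend_of_eq_some hc⟩
    · obtain ⟨c, hc⟩ := h.attack_neg n mv hn hmv hatt
      exact ⟨c, stmtAt_extend_of_eq_some hc⟩
  attacked r χ s hr hre hχ hs := by
    rw [length_moves_extend] at hr
    rcases Nat.lt_succ_iff_lt_or_eq.1 hr with hr | rfl
    · rw [stmtAt_extend_of_le hr.le] at hχ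
      obtain ⟨n, hn⟩ := h.attacked r χ s hr hre hχ hs
      exact ⟨n, isAttackOn_extend_iff.2 (.inl hn)⟩
    · obtain ⟨hatt, href⟩ := hlast hre
      exact ⟨_, isAttackOn_extend_iff.2 (.inr ⟨rfl, hatt, href⟩)⟩

theorem exists_attack_of_legalExt (h : Normal d) (heven : d.moves.length % 2 = 0)
    (hf : d.stmtAt d.moves.length = some (.form f)) (hm : LegalExt rulesetN d m) :
    ∃ s, Attacks s f ∧ m = ⟨s, true, d.moves.length⟩ := by
  obtain ⟨⟨hlt, hpar, hatt, hdef⟩, -, hfresh⟩ := (legalExt_iff h.legal).1 hm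
  have hre : m.ref % 2 = 0 := by omega
  obtain ⟨s, b, r⟩ := m
  cases b with
  | false =>
    obtain ⟨a, χ, ha, haa, hχ, hd⟩ := hdef rfl
    obtain ⟨c, hc⟩ := h.attack_neg _ a hre ha haa
    cases hχ.symm.trans hc
    cases hd
  | true =>
    obtain ⟨ψ, hψ, hs⟩ := hatt rfl
    obtain rfl : r = d.moves.length := by
      by_contra hne
      obtain ⟨n, hn⟩ := h.attacked r ψ s (by simp at hlt; omega) hre hψ hs
      exact hfresh rfl hre n hn
    cases hψ.symm.trans hf
    exact ⟨s, hs, rfl⟩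

theorem extend_attack (h : Normal d) (heven : d.moves.length % 2 = 0)
    (hf : d.stmtAt d.moves.length = some (.form f)) {s : Statement} (hs : Attacks s f) :
    LegalExt rulesetN d ⟨s, true, d.moves.length⟩ ∧
      Normal (d.extend ⟨s, true, d.moves.length⟩) ∧
      (d.extend ⟨s, true, d.moves.length⟩).oAssertions = d.oAssertions ∪ conceded s ∧
      (d.extend ⟨s, true, d.moves.length⟩).pDefenses = d.pDefenses ∪ defenses f s := by
  have hm : LegalExt rulesetN d ⟨s, true, d.moves.length⟩ := by
    refine (legalExt_iff h.legal).2 ⟨⟨Nat.lt_succ_self _, by simp; omega,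
      fun _ => ⟨f, hf, hs⟩, nofun⟩, fun h => by omega, fun _ _ n ⟨mv, hmv, _, href⟩ => ?_⟩
    have := (h.legal.1.moveOK hmv).1
    have := (pos_le_of_moveAt_eq_some hmv).2
    simp at href
    omega
  have hodd : (d.moves.length + 1) % 2 = 1 := by omega
  refine ⟨hm, h.extend hm (by omega) fun _ => ⟨rfl, rfl⟩, ?_, ?_⟩
  · simp [oAssertions_extend, hodd, conceded]
  · simp [pDefenses_extend h.legal.1, hodd, stmtAt_extend_of_le, hf]

theorem exists_assert (h : Normal d) (hodd : d.moves.length % 2 = 1)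
    (hf : f ∈ d.pDefenses ∨ .neg f ∈ d.oAssertions)
    (hat : (∃ p, f = .atom p) → f ∈ d.oAssertions) :
    ∃ m : Move, m.statement = .form f ∧ LegalExt rulesetN d m ∧ Normal (d.extend m) := by
  have key : ∀ m : Move, m.statement = .form f → m.ref % 2 = 1 →
      MoveOK d (d.moves.length + 1) m →
      (m.isAttack = true → ∃ c, d.stmtAt m.ref = some (.form (.neg c))) →
      ∃ m : Move, m.statement = .form f ∧ LegalExt rulesetN d m ∧ Normal (d.extend m) := by
    intro m hmf hodd' hok hneg
    have hm : LegalExt rulesetN d m := by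
      refine (legalExt_iff h.legal).2 ⟨hok, fun _ p hp => ?_, fun _ h => by omega⟩
      obtain rfl : f = .atom p := Statement.form.inj (hmf.symm.trans hp)
      exact hat ⟨p, rfl⟩
    exact ⟨m, hmf, hm, h.extend hm (fun _ => hneg) (by omega)⟩
  rcases hf with ⟨n, s, r, χ, hn, hmv, hr, hδ⟩ | ⟨n, hn, hs⟩
  · have := (pos_le_of_moveAt_eq_some hmv).2
    exact key ⟨.form f, false, n⟩ rfl hn ⟨by dsimp only; omega, by dsimp only; omega, nofun,
      fun _ => ⟨_, χ, hmv, rfl, hr, hδ⟩⟩ nofun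
  · have := le_of_stmtAt_eq_some hs
    exact key ⟨.form f, true, n⟩ rfl hn ⟨by dsimp only; omega, by dsimp only; omega,
      fun _ => ⟨_, hs, .neg f⟩, nofun⟩ fun _ => ⟨f, hs⟩

theorem exists_assert_of_pWinningC {C : Dialogue → Move → Prop} (h : Normal d)
    (hodd : d.moves.length % 2 = 1) (hm : LegalExt rulesetN d m)
    (hw : PWinningC rulesetN C (d.extend m)) :
    ∃ f, m.statement = .form f ∧ (f ∈ d.pDefenses ∨ .neg f ∈ d.oAssertions) ∧
      Normal (d.extend m) := by
  obtain ⟨⟨hlt, hpar, hatt, hdef⟩, -, -⟩ := (legalExt_iff h.legal).1 hm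
  have hro : m.ref % 2 = 1 := by omega
  obtain ⟨s, b, r⟩ := m
  cases b with
  | false =>
    obtain ⟨⟨s', b', r'⟩, χ, ha, rfl, hχ, hd⟩ := hdef rfl
    obtain ⟨δ, rfl⟩ : ∃ δ, s = .form δ := by cases hd <;> exact ⟨_, rfl⟩
    exact ⟨δ, rfl, .inl ⟨r, s', r', χ, hro, ha, hχ, hd⟩, h.extend hm nofun (by omega)⟩
  | true =>
    obtain ⟨ψ, hψ, hs⟩ := hatt rfl
    rcases hs.defends_or_neg with ⟨δ, hδ⟩ | ⟨c, rfl, rfl⟩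
    · exact (not_pWinningC_of_defensible hw hm (by omega) moveAt_extend_self
        (stmtAt_extend_of_eq_some hψ) hδ).elim
    · exact ⟨c, rfl, .inr ⟨r, hro, hψ⟩, h.extend hm (fun _ _ => ⟨c, hψ⟩) (by omega)⟩

end Normal

open NGame

theorem pWinning_of_oTurn {d : Dialogue} {f : Formula} (h : Normal d)
    (heven : d.moves.length % 2 = 0) (hf : d.stmtAt d.moves.length = some (.form f))
    (hwin : ∀ s, Attacks s f → PWinning rulesetN (d.extend ⟨s, true, d.moves.length⟩)) :
    PWinning rulesetN d := by
  refine .oMoves d (by unfold PTurn nextPos; omega) fun m hm => ?_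
  obtain ⟨s, hs, rfl⟩ := h.exists_attack_of_legalExt heven hf hm
  exact hwin s hs

theorem pWinning_of_win {A D : Set Formula} (hw : Win A D) {d : Dialogue} (h : Normal d)
    (hodd : d.moves.length % 2 = 1) (hA : A ⊆ d.oAssertions) (hD : D ⊆ d.pDefenses) :
    PWinning rulesetN d := by
  induction hw generalizing d with
  | intro f hf hat _ ih =>
    obtain ⟨m, hmf, hm, h'⟩ := h.exists_assert hodd (hf.imp (@hD _) (@hA _))
      fun hp => hA (hat hp)
    refine .pMove d m (by unfold PTurn nextPos; omega) hm trivial ?_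
    have heven : (d.moves.length + 1) % 2 = 0 := by omega
    have heven' : (d.extend m).moves.length % 2 = 0 := by simpa using heven
    have hf' : (d.extend m).stmtAt (d.extend m).moves.length = some (.form f) := by simp [hmf]
    refine pWinning_of_oTurn h' heven' hf' fun s hs => ?_
    obtain ⟨-, h'', hO, hP⟩ := h'.extend_attack heven' hf' hs
    refine ih s hs h'' (by simp; omega) ?_ ?_
    · rw [hO, oAssertions_extend_of_even heven]
      exact Set.union_subset_union_left _ hA
    · rw [hP, pDefenses_extend_of_even h.legal.1 heven]
      exact Set.union_subset_union_left _ hD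

theorem win_of_pWinningC {C : Dialogue → Move → Prop} {d : Dialogue}
    (hw : PWinningC rulesetN C d) :
    (Normal d → d.moves.length % 2 = 1 → Win d.oAssertions d.pDefenses) ∧
    (∀ f, Normal d → d.moves.length % 2 = 0 → d.stmtAt d.moves.length = some (.form f) →
      WinsAfter f d.oAssertions d.pDefenses) := by
  induction hw with
  | pMove d m hturn hm _ hw ih =>
    unfold PTurn nextPos at hturn
    refine ⟨fun h hodd => ?_, fun _ _ heven => by omega⟩
    obtain ⟨f, hmf, hf, h'⟩ := h.exists_assert_of_pWinningC hodd hm hw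
    have hW := ih.2 f h' (by simp; omega) (by simp [hmf])
    rw [oAssertions_extend_of_even hturn, pDefenses_extend_of_even h.legal.1 hturn] at hW
    exact .of_winsAfter hf hW
  | oMoves d hturn _ ih =>
    unfold PTurn nextPos at hturn
    refine ⟨fun _ hodd => by omega, fun f h heven hf => ⟨?_, fun s hs => ?_⟩⟩
    · rintro ⟨p, rfl⟩
      exact h.legal.atom_mem_oAssertions heven hf
    · obtain ⟨hm, h', hO, hP⟩ := h.extend_attack heven hf hs
      rw [← hO, ← hP]
      exact (ih _ hm).1 h' (by simp; omega)

theorem legal_initial {θ : Formula} (hθ : ∀ p, θ ≠ .atom p) : Legal rulesetN ⟨θ, []⟩ := by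
  refine ⟨fun _ _ h => by simp at h, fun n p _ hs => ?_, fun _ _ _ _ ⟨_, hmv, _⟩ => ?_⟩
  · obtain rfl : n = 0 := Nat.le_zero.1 (le_of_stmtAt_eq_some hs)
    simp [Dialogue.stmtAt] at hs
    exact absurd hs (hθ p)
  · have := pos_le_of_moveAt_eq_some hmv
    simp at this
    omega

theorem oAssertions_initial (θ : Formula) : (⟨θ, []⟩ : Dialogue).oAssertions = ∅ :=
  Set.eq_empty_of_forall_notMem fun _ ⟨n, hn, hs⟩ => by
    have := le_of_stmtAt_eq_some hs
    simp at this
    omega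

theorem pDefenses_initial (θ : Formula) : (⟨θ, []⟩ : Dialogue).pDefenses = ∅ :=
  Set.eq_empty_of_forall_notMem fun _ ⟨_, _, _, _, _, hmv, _⟩ => by
    have := pos_le_of_moveAt_eq_some hmv
    simp at this
    omega

theorem valid_rulesetN_iff {θ : Formula} : valid rulesetN θ ↔ WinsAfter θ ∅ ∅ := by
  constructor
  · rintro ⟨hL, hw⟩
    have hW := (win_of_pWinningC hw).2 θ (Normal.initial hL) rfl rfl
    rwa [oAssertions_initial, pDefenses_initial] at hW
  · intro hW
    have h := Normal.initial (legal_initial fun p hp => hW.1 ⟨p, hp⟩)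
    refine ⟨h.legal, pWinning_of_oTurn (f := θ) h rfl rfl fun s hs => ?_⟩
    obtain ⟨-, h', hO, hP⟩ := h.extend_attack (f := θ) rfl rfl hs
    exact pWinning_of_win (hW.2 s hs) h' rfl (by rw [hO, oAssertions_initial])
      (by rw [hP, pDefenses_initial])

/-- The set of N-valid formulas is closed under modus ponens. -/
theorem N_modus_ponens (φ ψ : Formula)
    (h₁ : valid rulesetN φ) (h₂ : valid rulesetN (.imp φ ψ)) :
    valid rulesetN ψ :=
  valid_rulesetN_iff.2 ((valid_rulesetN_iff.1 h₁).modus_ponens (valid_rulesetN_iff.1 h₂))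

end LorenzenDialogues
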